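/- arXiv:cs/0203022 — 2 statements merged into one kernel-verified Lean document; each statement's English description precedes it below -/
import Mathlib

section
/- (Filé decomposition.) For every sharing abstraction S over X and every F ⊆ X: γ_Sh(S) ∩ γ_Fr(F) = ∪{γ_Sh(B) ∩ γ_Fr(F) | B ∈ K_F(S)}. -/
/-! The inclusion `⊇` is monotonicity of `γ_Sh`. For `⊆`, take an idempotent mgu `θ` of `E`
with `α_Sh(θ) ⊆ S` and use `B = α_Sh(θ)`. Since `θ` is more general than the unifier witnessing
freeness, it maps each `x ∈ F` to a variable `y`, so `x` lies in `occ(θ, y)` and in no other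
sharing group of `θ`: the groups cover `F` and pairwise meet outside `F`. -/

open scoped Classical

namespace SharingPaper

/-- Finite first-order terms over an arity-indexed alphabet `F`, with
variables drawn from the countably infinite set `ℕ` (playing the role of `U`). -/
inductive Term (F : ℕ → Type) : Type
  | var : ℕ → Term F
  | app : (n : ℕ) → F n → (Fin n → Term F) → Term F

namespace Term

variable {F : ℕ → Type}

/-- The set `var(t)` of variables occurring in a term. -/
def vars : Term F → Set ℕ
  | var x => {x}
  | app n _ ts => ⋃ i : Fin n, vars (ts i)

/-- Number of occurrences of the variable `x` in a term. -/
def count (x : ℕ) : Term F → ℕ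
  | var y => if y = x then 1 else 0
  | app n _ ts => ∑ i : Fin n, count x (ts i)

/-- `χ(x, t) = min(2, number of occurrences of x in t)`. -/
def chiVar (x : ℕ) (t : Term F) : ℕ := min 2 (t.count x)

/-- `χ(t) = max {χ(x, t) | x ∈ U}`. -/
noncomputable def mult (t : Term F) : ℕ := sSup (Set.range fun x => chiVar x t)

end Term

variable {F : ℕ → Type}

/-- Substitutions, represented as maps from variables to terms. -/
abbrev Subst (F : ℕ → Type) := ℕ → Term F

namespace Subst

/-- Homomorphic extension of a substitution to terms. -/
def apply (θ : Subst F) : Term F → Term F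
  | .var x => θ x
  | .app n f ts => .app n f fun i => apply θ (ts i)

/-- `dom(θ) = {u | θ(u) ≠ u}`. -/
def dom (θ : Subst F) : Set ℕ := {x | θ x ≠ .var x}

/-- `rng(θ) = ∪ {var(θ(u)) | u ∈ dom(θ)}`. -/
def rng (θ : Subst F) : Set ℕ := ⋃ x ∈ dom θ, (θ x).vars

/-- A genuine substitution has a finite domain. -/
def IsSubst (θ : Subst F) : Prop := (dom θ).Finite

/-- Composition: `(θ ∘ ψ)(u) = θ(ψ(u))`. -/
def comp (θ ψ : Subst F) : Subst F := fun x => θ.apply (ψ x)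

/-- `θ` is idempotent iff `dom(θ) ∩ rng(θ) = ∅`. -/
def Idempotent (θ : Subst F) : Prop := dom θ ∩ rng θ = ∅

/-- `θ ≤ ψ` iff `ψ = δ ∘ θ` for some substitution `δ`. -/
def Le (θ ψ : Subst F) : Prop := ∃ δ : Subst F, IsSubst δ ∧ ψ = comp δ θ

/-- `occ(θ, y) = {u ∈ U | y ∈ var(θ(u))}`. -/
def occ (θ : Subst F) (y : ℕ) : Set ℕ := {u | y ∈ (θ u).vars}

/-- `α_Sh(θ) = {occ(θ, u) ∩ X | u ∈ U}`. -/
def alphaSh (X : Set ℕ) (θ : Subst F) : Set (Set ℕ) :=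
  Set.range fun u => occ θ u ∩ X

/-- An assignment `M ⊆ U` models `θ` iff for every `x ↦ t ∈ θ`, `x ∈ M ↔ var(t) ⊆ M`. -/
def Models (M : Set ℕ) (θ : Subst F) : Prop :=
  ∀ x ∈ dom θ, (x ∈ M ↔ (θ x).vars ⊆ M)

/-- `θ` satisfies a Pos abstraction `f` over `X` iff `M ∩ X ∈ f` for every
assignment `M` that models `θ`. -/
def Satisfies (X : Set ℕ) (θ : Subst F) (f : Set (Set ℕ)) : Prop :=
  ∀ M : Set ℕ, Models M θ → M ∩ X ∈ f

end Subst

/-- The set of unifiers of a set of equations. -/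
def unif (E : Set (Term F × Term F)) : Set (Subst F) :=
  {θ | Subst.IsSubst θ ∧ ∀ p ∈ E, θ.apply p.1 = θ.apply p.2}

/-- Most general unifiers. -/
def mgu (E : Set (Term F × Term F)) : Set (Subst F) :=
  {θ ∈ unif E | ∀ ψ ∈ unif E, Subst.Le θ ψ}

/-- Idempotent most general unifiers. -/
def imgu (E : Set (Term F × Term F)) : Set (Subst F) :=
  {θ ∈ mgu E | Subst.Idempotent θ}

/-- `γ_Sh(S)`. -/
def gammaSh (X : Set ℕ) (S : Set (Set ℕ)) : Set (Set (Term F × Term F)) :=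
  {E | E.Finite ∧ ∃ θ ∈ imgu E, Subst.alphaSh X θ ⊆ S}

/-- `γ_Fr(F)`. -/
def gammaFr (Fv : Set ℕ) : Set (Set (Term F × Term F)) :=
  {E | E.Finite ∧ ∃ θ ∈ imgu E, ∀ x ∈ Fv, ∃ y, θ x = Term.var y}

/-- `γ_Lin(L)`. -/
def gammaLin (L : Set ℕ) : Set (Set (Term F × Term F)) :=
  {E | E.Finite ∧ ∃ θ ∈ imgu E, ∀ x ∈ L, (θ x).mult ≤ 1}

/-- `γ_Pos(f)`. -/
def gammaPos (X : Set ℕ) (f : Set (Set ℕ)) : Set (Set (Term F × Term F)) :=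
  {E | E.Finite ∧ ∃ θ ∈ imgu E, Subst.Satisfies X θ f}

/-- `γ_SFL(S, F, L)`. -/
def gammaSFL (X : Set ℕ) (S : Set (Set ℕ)) (Fv L : Set ℕ) :
    Set (Set (Term F × Term F)) :=
  gammaSh X S ∩ gammaFr Fv ∩ gammaLin L

/-- `var(S) = ∪ {G | G ∈ S}`. -/
def varS {α : Type*} (S : Set (Set α)) : Set α := ⋃ G ∈ S, G

/-- `rel(t, S) = {G ∈ S | var(t) ∩ G ≠ ∅}`. -/
def rel (t : Term F) (S : Set (Set ℕ)) : Set (Set ℕ) :=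
  {G ∈ S | t.vars ∩ G ≠ ∅}

/-- Closure `S*`: the least superset of `S` closed under binary unions. -/
def closure {α : Type*} (S : Set (Set α)) : Set (Set α) :=
  ⋂₀ {S' | S ⊆ S' ∧ ∀ G1 ∈ S', ∀ G2 ∈ S', G1 ∪ G2 ∈ S'}

/-- Pairwise union `S1 ⊎ S2`. -/
def pairUnion {α : Type*} (S1 S2 : Set (Set α)) : Set (Set α) :=
  {G | ∃ G1 ∈ S1, ∃ G2 ∈ S2, G = G1 ∪ G2}

/-- `S^{*F}`: the least superset `S'` of `S` such that `G1 ∪ G2 ∈ S'` whenever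
`G1, G2 ∈ S'` and `G1 ∩ G2 ∩ F = ∅`. -/
def closureF {α : Type*} (Fv : Set α) (S : Set (Set α)) : Set (Set α) :=
  ⋂₀ {S' | S ⊆ S' ∧ ∀ G1 ∈ S', ∀ G2 ∈ S', G1 ∩ G2 ∩ Fv = ∅ → G1 ∪ G2 ∈ S'}

/-- `S1 ⊎_F S2`. -/
def pairUnionF {α : Type*} (Fv : Set α) (S1 S2 : Set (Set α)) : Set (Set α) :=
  {G | ∃ G1 ∈ S1, ∃ G2 ∈ S2, (G1 ≠ G2 → G1 ∩ G2 ∩ Fv = ∅) ∧ G = G1 ∪ G2}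

/-- The Filé decomposition `K_F(S)`. -/
def KF {α : Type*} (Fv : Set α) (S : Set (Set α)) : Set (Set (Set α)) :=
  {B | B ⊆ S ∧ Fv ⊆ varS B ∧
    ∀ G1 ∈ B, ∀ G2 ∈ B, G1 ≠ G2 → G1 ∩ G2 ∩ Fv = ∅}

/-- Abstract multiplicity `χ(t, S, L)`. -/
noncomputable def chiA (t : Term F) (S : Set (Set ℕ)) (L : Set ℕ) : ℕ :=
  if (∃ x ∈ varS S, Term.chiVar x t = 2) ∨
     (∃ x ∈ varS S, x ∈ t.vars \ L) ∨
     (∃ G ∈ S, ∃ x ∈ t.vars, ∃ y ∈ t.vars, x ≠ y ∧ x ∈ G ∧ y ∈ G)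
  then 2 else 1

/-- The term `t` is a variable belonging to the freeness set `Fv` ("t ∈ F"). -/
def IsFreeTerm (t : Term F) (Fv : Set ℕ) : Prop := ∃ x ∈ Fv, t = Term.var x

/-- The term `t` is a variable ("t ∈ U"). -/
def IsVarTerm (t : Term F) : Prop := ∃ x, t = Term.var x

namespace Subst

def MapsToVars (θ : Subst F) (Fv : Set ℕ) : Prop := ∀ x ∈ Fv, ∃ y, θ x = Term.var y

theorem exists_eq_var_of_apply_eq_var {δ : Subst F} {t : Term F} {y : ℕ}
    (h : δ.apply t = .var y) : ∃ z, t = .var z := by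
  cases t with
  | var z => exact ⟨z, rfl⟩
  | app n f ts => cases h

theorem Le.mapsToVars {θ ψ : Subst F} {Fv : Set ℕ} (hle : Le θ ψ) (hψ : ψ.MapsToVars Fv) :
    θ.MapsToVars Fv := by
  obtain ⟨δ, -, rfl⟩ := hle
  intro x hx
  obtain ⟨y, hy⟩ := hψ x hx
  exact exists_eq_var_of_apply_eq_var hy

theorem mem_occ_self_of_eq_var {θ : Subst F} {x y : ℕ} (h : θ x = .var y) : x ∈ occ θ y := by
  show y ∈ (θ x).vars
  rw [h]
  rfl

theorem subset_varS_alphaSh {θ : Subst F} {X Fv : Set ℕ} (hθ : θ.MapsToVars Fv) (hF : Fv ⊆ X) :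
    Fv ⊆ varS (alphaSh X θ) := by
  intro x hx
  obtain ⟨y, hy⟩ := hθ x hx
  exact Set.mem_biUnion ⟨y, rfl⟩ ⟨mem_occ_self_of_eq_var hy, hF hx⟩

theorem alphaSh_pairwise_inter_eq_empty {θ : Subst F} {X Fv : Set ℕ} (hθ : θ.MapsToVars Fv) :
    ∀ G1 ∈ alphaSh X θ, ∀ G2 ∈ alphaSh X θ, G1 ≠ G2 → G1 ∩ G2 ∩ Fv = ∅ := by
  rintro _ ⟨u1, rfl⟩ _ ⟨u2, rfl⟩ hne
  refine Set.eq_empty_of_forall_notMem ?_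
  rintro x ⟨⟨⟨hu1, -⟩, hu2, -⟩, hx⟩
  refine hne ?_
  obtain ⟨y, hy⟩ := hθ x hx
  rw [occ, Set.mem_ofPred_eq, hy] at hu1 hu2
  rw [show u1 = y from hu1, show u2 = y from hu2]

theorem alphaSh_mem_KF {θ : Subst F} {X Fv : Set ℕ} {S : Set (Set ℕ)} (hS : alphaSh X θ ⊆ S)
    (hθ : θ.MapsToVars Fv) (hF : Fv ⊆ X) : alphaSh X θ ∈ KF Fv S :=
  ⟨hS, subset_varS_alphaSh hθ hF, alphaSh_pairwise_inter_eq_empty hθ⟩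

end Subst

theorem gammaSh_mono {X : Set ℕ} {B S : Set (Set ℕ)} (h : B ⊆ S) :
    (gammaSh X B : Set (Set (Term F × Term F))) ⊆ gammaSh X S := by
  rintro E ⟨hE, θ, hθ, hB⟩
  exact ⟨hE, θ, hθ, hB.trans h⟩

theorem mem_gammaSh_alphaSh {E : Set (Term F × Term F)} {θ : Subst F} (X : Set ℕ)
    (hE : E.Finite) (hθ : θ ∈ imgu E) : E ∈ gammaSh X (Subst.alphaSh X θ) :=
  ⟨hE, θ, hθ, subset_rfl⟩

theorem Subst.mapsToVars_of_mem_gammaFr {E : Set (Term F × Term F)} {θ : Subst F} {Fv : Set ℕ}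
    (hE : E ∈ gammaFr Fv) (hθ : θ ∈ mgu E) : θ.MapsToVars Fv := by
  obtain ⟨-, ψ, hψ, hψFv⟩ := hE
  exact (hθ.2 ψ hψ.1.1).mapsToVars hψFv

theorem stmt9_general {F : ℕ → Type} (X : Set ℕ)
    (S : Set (Set ℕ))
    (Fv : Set ℕ) (hF : Fv ⊆ X) :
    (gammaSh X S ∩ gammaFr Fv : Set (Set (Term F × Term F))) =
      ⋃ B ∈ KF Fv S, (gammaSh X B ∩ gammaFr Fv) := by
  ext E
  simp only [Set.mem_inter_iff, Set.mem_iUnion]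
  constructor
  · rintro ⟨⟨hE, θ, hθ, hsh⟩, hfr⟩
    have hθFv := Subst.mapsToVars_of_mem_gammaFr hfr hθ.1
    exact ⟨_, Subst.alphaSh_mem_KF hsh hθFv hF, mem_gammaSh_alphaSh X hE hθ, hfr⟩
  · rintro ⟨B, hB, hsh, hfr⟩
    exact ⟨gammaSh_mono hB.1 hsh, hfr⟩

/-- Filé decomposition:
`γ_Sh(S) ∩ γ_Fr(F) = ∪ {γ_Sh(B) ∩ γ_Fr(F) | B ∈ K_F(S)}`. -/
theorem stmt9 {F : ℕ → Type} (X : Set ℕ) (hX : X.Finite)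
    (S : Set (Set ℕ)) (hS : ∅ ∈ S) (hSX : ∀ G ∈ S, G ⊆ X)
    (Fv : Set ℕ) (hF : Fv ⊆ X) :
    (gammaSh X S ∩ gammaFr Fv : Set (Set (Term F × Term F))) =
      ⋃ B ∈ KF Fv S, (gammaSh X B ∩ gammaFr Fv) :=
  stmt9_general X S Fv hF

end SharingPaper
end

section
/- Let X be a set, F ⊆ X, S a set of subsets of X, B ∈ K_F(S), and R1, R2 ⊆ B. Then R1 ⊎ R2* = R1 ⊎_F R2*. -/
namespace SharingPaper

section

variable {α : Type*}

theorem subset_closure (S : Set (Set α)) : S ⊆ closure S :=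
  fun _ hG _ hS' => hS'.1 hG

theorem union_mem_closure {S : Set (Set α)} {G1 G2 : Set α} (h1 : G1 ∈ closure S)
    (h2 : G2 ∈ closure S) : G1 ∪ G2 ∈ closure S :=
  fun S' hS' => hS'.2 _ (h1 S' hS') _ (h2 S' hS')

theorem closure_subset {S T : Set (Set α)} (hST : S ⊆ T)
    (hT : ∀ G1 ∈ T, ∀ G2 ∈ T, G1 ∪ G2 ∈ T) : closure S ⊆ T :=
  Set.sInter_subset_of_mem ⟨hST, hT⟩

theorem pairUnionF_subset_pairUnion (Fv : Set α) (S1 S2 : Set (Set α)) :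
    pairUnionF Fv S1 S2 ⊆ pairUnion S1 S2 := by
  rintro G ⟨G1, hG1, G2, hG2, -, rfl⟩
  exact ⟨G1, hG1, G2, hG2, rfl⟩

/- `G'` is the union producing `G` with the copy of `A` (if any) removed, or `A` itself if nothing
else is left. -/
theorem exists_union_eq_union_of_mem_closure {Fv A : Set α} {R : Set (Set α)}
    (hR : ∀ G ∈ R, A ≠ G → A ∩ G ∩ Fv = ∅) {G : Set α} (hG : G ∈ closure R) :
    ∃ G' ∈ closure R, (A ≠ G' → A ∩ G' ∩ Fv = ∅) ∧ A ∪ G = A ∪ G' := by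
  refine closure_subset
    (T := {G | ∃ G' ∈ closure R, (A ≠ G' → A ∩ G' ∩ Fv = ∅) ∧ A ∪ G = A ∪ G'})
    (fun G hG => ⟨G, subset_closure R hG, hR G hG, rfl⟩) ?_ hG
  rintro Ga ⟨Ga', hGa', hdisja, hAa⟩ Gb ⟨Gb', hGb', hdisjb, hAb⟩
  have hAab : A ∪ (Ga ∪ Gb) = A ∪ (Ga' ∪ Gb') := by
    rw [Set.union_union_distrib_left, hAa, hAb, ← Set.union_union_distrib_left]
  by_cases ha : A = Ga'
  · subst ha
    exact ⟨Gb', hGb', hdisjb, by rw [hAab]; exact sup_left_idem A Gb'⟩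
  by_cases hb : A = Gb'
  · subst hb
    exact ⟨Ga', hGa', hdisja, by rw [hAab, Set.union_comm Ga' A]; exact sup_left_idem A Ga'⟩
  refine ⟨Ga' ∪ Gb', union_mem_closure hGa' hGb', fun _ => ?_, hAab⟩
  rw [Set.inter_union_distrib_left, Set.union_inter_distrib_right, hdisja ha, hdisjb hb,
    Set.union_empty]

end

/-- if `B ∈ K_F(S)` and `R1, R2 ⊆ B` then `R1 ⊎ R2* = R1 ⊎_F R2*`. -/
theorem stmt13 {α : Type*} (Fv : Set α) (S : Set (Set α))
    (B : Set (Set α)) (hB : B ∈ KF Fv S)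
    (R1 R2 : Set (Set α)) (hR1 : R1 ⊆ B) (hR2 : R2 ⊆ B) :
    pairUnion R1 (closure R2) = pairUnionF Fv R1 (closure R2) := by
  refine Set.Subset.antisymm ?_ (pairUnionF_subset_pairUnion Fv R1 (closure R2))
  rintro _ ⟨G1, hG1, G2, hG2, rfl⟩
  have hdisj : ∀ G ∈ R2, G1 ≠ G → G1 ∩ G ∩ Fv = ∅ := fun G hG =>
    hB.2.2 G1 (hR1 hG1) G (hR2 hG)
  obtain ⟨G', hG', hG'disj, hunion⟩ := exists_union_eq_union_of_mem_closure hdisj hG2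
  exact ⟨G1, hG1, G', hG', hG'disj, hunion⟩

end SharingPaper
end
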